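/- arXiv:1712.10203 — 4 statements merged into one kernel-verified Lean document; each statement's English description precedes it below -/
import Mathlib

section
/- Let d, m ≥ 1 be integers, let Ω ⊆ ℝ^d be a Lebesgue-measurable set, and let Λ, M > 0. Let v : Ω → ℝ^m be measurable with |v(x)| ≤ Λ for almost every x ∈ Ω, let w : Ω → [0, +∞] be measurable, and let f : ℝ^m → [0, +∞] be Borel measurable. Then ∫_{B_M^m} ( ∫_Ω w(x) f(v(x) − y) dx ) dy ≤ ( ∫_Ω w(x) dx ) · ( ∫_{B_{M+Λ}^m} f(z) dz ). -/
open MeasureTheory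
open scoped ENNReal

/-- The "projection trick" integral inequality of Hardt–Kinderlehrer–Lin:
for `v` bounded by `Λ` a.e. on `Ω`, `w ≥ 0` measurable and `f ≥ 0` Borel,
`∫_{B_M} ∫_Ω w(x) f(v(x) - y) dx dy ≤ (∫_Ω w) * ∫_{B_{M+Λ}} f`. -/
theorem hkl_projection_trick (d m : ℕ) (hd : 1 ≤ d) (hm : 1 ≤ m)
    (Ω : Set (EuclideanSpace ℝ (Fin d))) (hΩ : MeasurableSet Ω)
    (Λ M : ℝ) (hΛ : 0 < Λ) (hM : 0 < M)
    (v : EuclideanSpace ℝ (Fin d) → EuclideanSpace ℝ (Fin m)) (hv : Measurable v)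
    (hvΛ : ∀ᵐ x ∂(volume.restrict Ω), ‖v x‖ ≤ Λ)
    (w : EuclideanSpace ℝ (Fin d) → ℝ≥0∞) (hw : Measurable w)
    (f : EuclideanSpace ℝ (Fin m) → ℝ≥0∞) (hf : Measurable f) :
    (∫⁻ y in Metric.ball (0 : EuclideanSpace ℝ (Fin m)) M,
        ∫⁻ x in Ω, w x * f (v x - y)) ≤
      (∫⁻ x in Ω, w x) *
        ∫⁻ z in Metric.ball (0 : EuclideanSpace ℝ (Fin m)) (M + Λ), f z := by
  set C := ∫⁻ z in Metric.ball (0 : EuclideanSpace ℝ (Fin m)) (M + Λ), f z with hC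
  -- swap the order of integration
  have hswap : (∫⁻ y in Metric.ball (0 : EuclideanSpace ℝ (Fin m)) M,
      ∫⁻ x in Ω, w x * f (v x - y)) =
      ∫⁻ x in Ω, ∫⁻ y in Metric.ball (0 : EuclideanSpace ℝ (Fin m)) M,
        w x * f (v x - y) := by
    apply lintegral_lintegral_swap
    exact ((hw.comp measurable_snd).mul
      (hf.comp ((hv.comp measurable_snd).sub measurable_fst))).aemeasurable
  rw [hswap]
  -- inner bound for a.e. x
  have key : ∀ᵐ x ∂(volume.restrict Ω),
      (∫⁻ y in Metric.ball (0 : EuclideanSpace ℝ (Fin m)) M, w x * f (v x - y))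
        ≤ w x * C := by
    filter_upwards [hvΛ] with x hx
    rw [lintegral_const_mul _ (show Measurable fun y : EuclideanSpace ℝ (Fin m) => f (v x - y) from hf.comp (measurable_id.const_sub (v x)))]
    gcongr
    set c := v x
    have hemb : MeasurableEmbedding (fun y : EuclideanSpace ℝ (Fin m) => c - y) :=
      (MeasurableEquiv.subLeft c).measurableEmbedding
    have hmp : MeasurePreserving (fun y : EuclideanSpace ℝ (Fin m) => c - y)
        volume volume := Measure.measurePreserving_sub_left volume c
    have hsub : Metric.ball (0 : EuclideanSpace ℝ (Fin m)) M ⊆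
        (fun y => c - y) ⁻¹' Metric.ball (0 : EuclideanSpace ℝ (Fin m)) (M + Λ) := by
      intro y hy
      simp only [Set.mem_preimage, Metric.mem_ball, dist_zero_right] at *
      calc ‖c - y‖ ≤ ‖c‖ + ‖y‖ := norm_sub_le _ _
        _ < M + Λ := by linarith
    calc (∫⁻ y in Metric.ball (0 : EuclideanSpace ℝ (Fin m)) M, f (c - y))
        ≤ ∫⁻ y in (fun y => c - y) ⁻¹' Metric.ball (0 : EuclideanSpace ℝ (Fin m)) (M + Λ),
            f (c - y) := lintegral_mono_set hsub
      _ = C := hmp.setLIntegral_comp_preimage_emb hemb f _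
  calc (∫⁻ x in Ω, ∫⁻ y in Metric.ball (0 : EuclideanSpace ℝ (Fin m)) M,
          w x * f (v x - y))
      ≤ ∫⁻ x in Ω, w x * C := lintegral_mono_ae key
    _ = (∫⁻ x in Ω, w x) * C := lintegral_mul_const'' C hw.aemeasurable ▸ by
          simp [mul_comm]
end

section
/- Let m ≥ 1 and 2 ≤ k ≤ m be integers. Let 𝒳 be a nonempty compact subset of ℝ^m contained in a finite union of affine subspaces of ℝ^m, each of dimension m − k, and let ρ be a map of class C¹ on the open set ℝ^m ∖ 𝒳 with values in ℝ^m, satisfying ‖Dρ(z)‖ ≤ C₀ / dist(z, 𝒳) for every z ∈ ℝ^m ∖ 𝒳 and some constant C₀ > 0. Then for every R > 0 one has ∫_{B_R^m ∖ 𝒳} ‖Dρ(z)‖^{k−1} dz < +∞; in other words, ‖Dρ‖^{k−1} is locally integrable on ℝ^m (extending it by 0 on 𝒳). -/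
/-!
Since `𝒳 ⊆ ⋃ᵢ Vᵢ`, `dist(z, 𝒳)⁻¹ ≤ maxᵢ dist(z, Vᵢ)⁻¹`, so the integrand is at most
`C₀^(k-1) ∑ᵢ dist(z, Vᵢ)^-(k-1)` and it suffices to integrate `dist(z, V)^-n` over a ball for an
affine subspace `V` of codimension `k > n`. The linear map that is the identity on the direction of
`V` and `ε` times the identity on its orthogonal complement has determinant `εᵏ`, and its image of
a ball, translated to `V`, covers the points of a smaller ball within distance `ε` of `V`. Hence
`|{dist(z, V)^-n ≥ t}| = O(t^(-k/n))`, and since `k/n > 1` the layer-cake formula makes the integral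
finite.
-/

open MeasureTheory Metric Set Module
open scoped ENNReal

theorem lintegral_ofReal_lt_top_of_meas_le_rpow_neg {α : Type*} [MeasurableSpace α]
    {μ : Measure α} [IsFiniteMeasure μ] {f : α → ℝ} (hf : 0 ≤ᵐ[μ] f) (hfm : AEMeasurable f μ)
    {C : ℝ≥0∞} (hC : C ≠ ∞) {p : ℝ} (hp : 1 < p)
    (h : ∀ t > 1, μ {a | t ≤ f a} ≤ C * ENNReal.ofReal (t ^ (-p))) :
    ∫⁻ a, ENNReal.ofReal (f a) ∂μ < ∞ := by
  rw [lintegral_eq_lintegral_meas_le μ hf hfm]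
  have htail : ∫⁻ t in Ioi 1, ENNReal.ofReal (t ^ (-p)) < ∞ :=
    (integrableOn_Ioi_rpow_of_lt (by linarith) one_pos).setLIntegral_lt_top
  calc ∫⁻ t in Ioi 0, μ {a | t ≤ f a}
      ≤ ∫⁻ t in Ioc 0 1 ∪ Ioi 1, μ {a | t ≤ f a} := lintegral_mono_set Ioi_subset_Ioc_union_Ioi
    _ ≤ (∫⁻ t in Ioc 0 1, μ {a | t ≤ f a}) + ∫⁻ t in Ioi 1, μ {a | t ≤ f a} :=
      lintegral_union_le _ _ _
    _ ≤ (∫⁻ _ in Ioc (0 : ℝ) 1, μ univ) + ∫⁻ t in Ioi 1, C * ENNReal.ofReal (t ^ (-p)) :=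
      add_le_add (lintegral_mono fun _ => measure_mono (subset_univ _))
        (setLIntegral_mono' measurableSet_Ioi h)
    _ = μ univ * volume (Ioc (0 : ℝ) 1) + C * ∫⁻ t in Ioi 1, ENNReal.ofReal (t ^ (-p)) := by
      rw [setLIntegral_const, lintegral_const_mul' _ _ hC]
    _ < ∞ := by
      rw [Real.volume_Ioc]
      exact ENNReal.add_lt_top.2 ⟨by finiteness, ENNReal.mul_lt_top hC.lt_top htail⟩

theorem le_rpow_neg_inv_of_le_inv_pow {d t : ℝ} (hd : 0 ≤ d) (ht : 0 < t) {n : ℕ} (hn : n ≠ 0)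
    (h : t ≤ d⁻¹ ^ n) : d ≤ t ^ (-(n : ℝ)⁻¹) := by
  rcases hd.eq_or_lt with rfl | hd
  · positivity
  have hdn : d ^ n ≤ t⁻¹ := by
    rw [inv_pow] at h
    exact (le_inv_comm₀ ht (by positivity)).1 h
  calc d = (d ^ n) ^ (n : ℝ)⁻¹ := (Real.pow_rpow_inv_natCast hd.le hn).symm
    _ ≤ t⁻¹ ^ (n : ℝ)⁻¹ := by gcongr
    _ = t ^ (-(n : ℝ)⁻¹) := by rw [Real.rpow_neg ht.le, Real.inv_rpow ht.le]

namespace Submodule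

variable {F : Type*} [NormedAddCommGroup F] [InnerProductSpace ℝ F]

theorem det_starProjection_add_smul_starProjection_orthogonal [FiniteDimensional ℝ F]
    (W : Submodule ℝ F) (c : ℝ) :
    LinearMap.det ((W.starProjection + c • Wᗮ.starProjection : F →L[ℝ] F) : F →ₗ[ℝ] F) =
      c ^ finrank ℝ Wᗮ := by
  let e := W.prodEquivOfIsCompl Wᗮ W.isCompl_orthogonal
  have hconj : ((W.starProjection + c • Wᗮ.starProjection : F →L[ℝ] F) : F →ₗ[ℝ] F) ∘ₗ
      (e : W × Wᗮ →ₗ[ℝ] F) = e ∘ₗ LinearMap.id.prodMap (c • LinearMap.id) := by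
    ext ⟨w, hw⟩ <;>
      simp [e, starProjection_eq_self_iff.2, (starProjection_apply_eq_zero_iff _).2, hw]
  have hL : ((W.starProjection + c • Wᗮ.starProjection : F →L[ℝ] F) : F →ₗ[ℝ] F) =
      (e : W × Wᗮ →ₗ[ℝ] F) ∘ₗ LinearMap.id.prodMap (c • LinearMap.id) ∘ₗ
        (e.symm : F →ₗ[ℝ] W × Wᗮ) :=
    LinearMap.ext fun x => by simpa using congr($hconj (e.symm x))
  rw [hL, LinearMap.det_conj, LinearMap.det_prodMap, LinearMap.det_id, one_mul,
    LinearMap.det_smul, LinearMap.det_id, mul_one]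

theorem mem_image_starProjection_add_smul_starProjection_orthogonal
    (W : Submodule ℝ F) [W.HasOrthogonalProjection] {c : ℝ} (hc : 0 < c) {v : F}
    (hv : ‖Wᗮ.starProjection v‖ ≤ c) :
    v ∈ (W.starProjection + c • Wᗮ.starProjection : F →L[ℝ] F) '' closedBall 0 (‖v‖ + 1) := by
  refine ⟨W.starProjection v + c⁻¹ • Wᗮ.starProjection v, ?_, ?_⟩
  · rw [mem_closedBall_zero_iff]
    calc ‖W.starProjection v + c⁻¹ • Wᗮ.starProjection v‖
        ≤ ‖W.starProjection v‖ + c⁻¹ * ‖Wᗮ.starProjection v‖ := by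
          grw [norm_add_le, norm_smul, Real.norm_of_nonneg (inv_nonneg.2 hc.le)]
      _ ≤ ‖v‖ + c⁻¹ * c := by grw [norm_starProjection_apply_le, hv]
      _ = ‖v‖ + 1 := by rw [inv_mul_cancel₀ hc.ne']
  · have hPP : W.starProjection (W.starProjection v) = W.starProjection v :=
      W.starProjection_eq_self_iff.2 (W.starProjection_apply_mem v)
    simp [hPP, hc.ne']

end Submodule

namespace AffineSubspace

variable {F : Type*} [NormedAddCommGroup F] [InnerProductSpace ℝ F]

theorem norm_starProjection_orthogonal_sub_le_infDist (V : AffineSubspace ℝ F)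
    [V.directionᗮ.HasOrthogonalProjection] {p : F} (hp : p ∈ V) (z : F) :
    ‖V.directionᗮ.starProjection (z - p)‖ ≤ infDist z V := by
  refine (le_infDist ⟨p, hp⟩).2 fun y hy => ?_
  have hyp : y - p ∈ V.direction := V.vsub_mem_direction hy hp
  calc ‖V.directionᗮ.starProjection (z - p)‖ = ‖V.directionᗮ.starProjection (z - y)‖ := by
        rw [← sub_add_sub_cancel z y p, map_add,
          Submodule.starProjection_orthogonal_apply_eq_zero hyp, add_zero]
    _ ≤ ‖z - y‖ := Submodule.norm_starProjection_apply_le _ _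
    _ = dist z y := (dist_eq_norm _ _).symm

variable [FiniteDimensional ℝ F] [MeasurableSpace F] [BorelSpace F] (μ : Measure F)
  [μ.IsAddHaarMeasure]

theorem addHaar_ball_inter_setOf_infDist_le_le (V : AffineSubspace ℝ F) {p : F} (hp : p ∈ V)
    (R : ℝ) {ε : ℝ} (hε : 0 < ε) :
    μ (ball 0 R ∩ {z | infDist z V ≤ ε}) ≤
      ENNReal.ofReal (ε ^ finrank ℝ V.directionᗮ) * μ (closedBall 0 (R + ‖p‖ + 1)) := by
  set L : F →L[ℝ] F := V.direction.starProjection + ε • V.directionᗮ.starProjection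
  have hsub :
      ball 0 R ∩ {z | infDist z V ≤ ε} ⊆ (p + ·) '' (L '' closedBall 0 (R + ‖p‖ + 1)) := by
    rintro z ⟨hz, hzV⟩
    obtain ⟨u, hu, hLu⟩ := V.direction.mem_image_starProjection_add_smul_starProjection_orthogonal
      hε ((V.norm_starProjection_orthogonal_sub_le_infDist hp z).trans hzV)
    refine ⟨z - p, ⟨u, closedBall_subset_closedBall ?_ hu, hLu⟩, add_sub_cancel _ _⟩
    have := norm_sub_le z p
    rw [mem_ball_zero_iff] at hz
    linarith
  calc μ (ball 0 R ∩ {z | infDist z V ≤ ε})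
      ≤ μ ((p + ·) '' (L '' closedBall 0 (R + ‖p‖ + 1))) := measure_mono hsub
    _ = μ (L '' closedBall 0 (R + ‖p‖ + 1)) := by rw [image_add_left, measure_preimage_add]
    _ = _ := by
      rw [Measure.addHaar_image_continuousLinearMap,
        Submodule.det_starProjection_add_smul_starProjection_orthogonal,
        abs_of_nonneg (by positivity)]

theorem setLIntegral_ball_inv_infEDist_pow_lt_top (V : AffineSubspace ℝ F)
    (hV : (V : Set F).Nonempty) {n : ℕ} (hn : 0 < n) (hnV : n < finrank ℝ V.directionᗮ) (R : ℝ) :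
    ∫⁻ z in ball 0 R, (infEDist z V)⁻¹ ^ n ∂μ < ∞ := by
  obtain ⟨p, hp⟩ := hV
  have hVtop : V ≠ ⊤ := by
    rintro rfl
    rw [direction_top, Submodule.top_orthogonal_eq_bot, finrank_bot] at hnV
    omega
  have hae : (fun z => (infEDist z V)⁻¹ ^ n) =ᵐ[μ.restrict (ball 0 R)]
      fun z => ENNReal.ofReal ((infDist z V)⁻¹ ^ n) := by
    refine ae_restrict_of_ae <|
      (measure_eq_zero_iff_ae_notMem.1 (μ.addHaar_affineSubspace V hVtop)).mono fun z hzV => ?_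
    have hd : 0 < infDist z V :=
      (V.closed_of_finiteDimensional.notMem_iff_infDist_pos ⟨p, hp⟩).1 hzV
    dsimp only
    rw [ENNReal.ofReal_pow (by positivity), ENNReal.ofReal_inv_of_pos hd, infDist,
      ENNReal.ofReal_toReal (infEDist_ne_top ⟨p, hp⟩)]
  rw [lintegral_congr_ae hae]
  have : IsFiniteMeasure (μ.restrict (ball 0 R)) :=
    isFiniteMeasure_restrict.2 measure_ball_lt_top.ne
  have hexp : 1 < (finrank ℝ V.directionᗮ : ℝ) / n :=
    (one_lt_div (Nat.cast_pos.2 hn)).2 (by exact_mod_cast hnV)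
  refine lintegral_ofReal_lt_top_of_meas_le_rpow_neg
    (ae_of_all _ fun _ => pow_nonneg (inv_nonneg.2 infDist_nonneg) n) (by fun_prop)
    (measure_closedBall_lt_top (μ := μ) (x := 0) (r := R + ‖p‖ + 1)).ne hexp fun t ht => ?_
  rw [Measure.restrict_apply' measurableSet_ball]
  calc μ ({z | t ≤ (infDist z V)⁻¹ ^ n} ∩ ball 0 R)
      ≤ μ (ball 0 R ∩ {z | infDist z V ≤ t ^ (-(n : ℝ)⁻¹)}) :=
        measure_mono fun z ⟨hzt, hzR⟩ =>
          ⟨hzR, le_rpow_neg_inv_of_le_inv_pow infDist_nonneg (by linarith) hn.ne' hzt⟩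
    _ ≤ ENNReal.ofReal ((t ^ (-(n : ℝ)⁻¹)) ^ finrank ℝ V.directionᗮ) *
          μ (closedBall 0 (R + ‖p‖ + 1)) :=
        V.addHaar_ball_inter_setOf_infDist_le_le μ hp R (by positivity)
    _ = _ := by
        rw [mul_comm, ← Real.rpow_natCast, ← Real.rpow_mul (by positivity)]
        ring_nf

end AffineSubspace

theorem inv_infEDist_pow_le_sum_of_subset_iUnion {α ι : Type*} [PseudoEMetricSpace α] [Fintype ι]
    {s : Set α} (hs : s.Nonempty) {t : ι → Set α} (hst : s ⊆ ⋃ i, t i) (x : α) (n : ℕ) :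
    (infEDist x s)⁻¹ ^ n ≤ ∑ i, (infEDist x (t i))⁻¹ ^ n := by
  have : Nonempty ι := by
    obtain ⟨i, -⟩ := mem_iUnion.1 (hst hs.some_mem)
    exact ⟨i⟩
  obtain ⟨i, hi⟩ := exists_eq_ciInf_of_finite (f := fun i => infEDist x (t i))
  have hle : infEDist x (t i) ≤ infEDist x s := by
    rw [hi, ← infEDist_iUnion]
    exact infEDist_anti hst
  calc (infEDist x s)⁻¹ ^ n ≤ (infEDist x (t i))⁻¹ ^ n := by gcongr
    _ ≤ ∑ j, (infEDist x (t j))⁻¹ ^ n :=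
      Finset.single_le_sum (f := fun j => (infEDist x (t j))⁻¹ ^ n) (fun j _ => zero_le)
        (Finset.mem_univ i)

theorem ofReal_pow_le_of_le_div_infDist {α : Type*} [PseudoMetricSpace α] {s : Set α}
    (hs : s.Nonempty) {x : α} {a c : ℝ} (ha : 0 ≤ a) (h : a ≤ c / infDist x s) (n : ℕ) :
    ENNReal.ofReal (a ^ n) ≤ ENNReal.ofReal c ^ n * (infEDist x s)⁻¹ ^ n := by
  grw [ENNReal.ofReal_pow ha, ← mul_pow, h, ENNReal.ofReal_div_le infDist_nonneg, infDist,
    ENNReal.ofReal_toReal (infEDist_ne_top hs), div_eq_mul_inv]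

theorem fderiv_retraction_pow_locally_integrable_general (m k : ℕ)
    (hk2 : 2 ≤ k) (hkm : k ≤ m)
    (𝒳 : Set (EuclideanSpace ℝ (Fin m))) (h𝒳ne : 𝒳.Nonempty) (h𝒳c : IsCompact 𝒳)
    (n : ℕ) (Vs : Fin n → AffineSubspace ℝ (EuclideanSpace ℝ (Fin m)))
    (hVne : ∀ i, (Vs i : Set (EuclideanSpace ℝ (Fin m))).Nonempty)
    (hVdim : ∀ i, Module.finrank ℝ (Vs i).direction = m - k)
    (h𝒳sub : 𝒳 ⊆ ⋃ i, (Vs i : Set (EuclideanSpace ℝ (Fin m))))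
    (ρ : EuclideanSpace ℝ (Fin m) → EuclideanSpace ℝ (Fin m))
    (C₀ : ℝ)
    (hDρ : ∀ z ∉ 𝒳, ‖fderiv ℝ ρ z‖ ≤ C₀ / Metric.infDist z 𝒳)
    (R : ℝ) :
    ∫⁻ z in Metric.ball (0 : EuclideanSpace ℝ (Fin m)) R \ 𝒳,
        ENNReal.ofReal (‖fderiv ℝ ρ z‖ ^ (k - 1))
      < ⊤ := by
  have hcodim (i : Fin n) : finrank ℝ (Vs i).directionᗮ = k := by
    have := (Vs i).direction.finrank_add_finrank_orthogonal
    rw [hVdim, finrank_euclideanSpace_fin] at this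
    omega
  calc ∫⁻ z in ball 0 R \ 𝒳, ENNReal.ofReal (‖fderiv ℝ ρ z‖ ^ (k - 1))
      ≤ ∫⁻ z in ball 0 R \ 𝒳, ENNReal.ofReal C₀ ^ (k - 1) *
          ∑ i, (infEDist z (Vs i))⁻¹ ^ (k - 1) :=
        setLIntegral_mono' (measurableSet_ball.diff h𝒳c.isClosed.measurableSet)
          fun z hz => (ofReal_pow_le_of_le_div_infDist h𝒳ne (norm_nonneg _) (hDρ z hz.2) _).trans
            (by grw [inv_infEDist_pow_le_sum_of_subset_iUnion h𝒳ne h𝒳sub])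
    _ ≤ ∫⁻ z in ball (0 : EuclideanSpace ℝ (Fin m)) R, ENNReal.ofReal C₀ ^ (k - 1) *
          ∑ i, (infEDist z (Vs i))⁻¹ ^ (k - 1) :=
        lintegral_mono_set sdiff_subset
    _ = ENNReal.ofReal C₀ ^ (k - 1) *
          ∑ i, ∫⁻ z in ball (0 : EuclideanSpace ℝ (Fin m)) R, (infEDist z (Vs i))⁻¹ ^ (k - 1) := by
        rw [lintegral_const_mul' _ _ (by finiteness), lintegral_finsetSum _ fun i _ => by fun_prop]
    _ < ⊤ := ENNReal.mul_lt_top (by finiteness) <| ENNReal.sum_lt_top.2 fun i _ =>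
        (Vs i).setLIntegral_ball_inv_infEDist_pow_lt_top volume (hVne i) (by omega)
          (by rw [hcodim]; omega) R

/-- If `𝒳 ⊆ ℝ^m` is a nonempty compact set contained in a finite union of affine
subspaces of dimension `m - k`, and `ρ` is `C¹` on `ℝ^m ∖ 𝒳` with
`‖Dρ(z)‖ ≤ C₀ / dist(z, 𝒳)`, then `‖Dρ‖^{k-1}` is locally integrable on `ℝ^m`. -/
theorem fderiv_retraction_pow_locally_integrable (m k : ℕ) (hm : 1 ≤ m)
    (hk2 : 2 ≤ k) (hkm : k ≤ m)
    (𝒳 : Set (EuclideanSpace ℝ (Fin m))) (h𝒳ne : 𝒳.Nonempty) (h𝒳c : IsCompact 𝒳)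
    (n : ℕ) (Vs : Fin n → AffineSubspace ℝ (EuclideanSpace ℝ (Fin m)))
    (hVne : ∀ i, (Vs i : Set (EuclideanSpace ℝ (Fin m))).Nonempty)
    (hVdim : ∀ i, Module.finrank ℝ (Vs i).direction = m - k)
    (h𝒳sub : 𝒳 ⊆ ⋃ i, (Vs i : Set (EuclideanSpace ℝ (Fin m))))
    (ρ : EuclideanSpace ℝ (Fin m) → EuclideanSpace ℝ (Fin m))
    (hρ : ContDiffOn ℝ 1 ρ 𝒳ᶜ)
    (C₀ : ℝ) (hC₀ : 0 < C₀)
    (hDρ : ∀ z ∉ 𝒳, ‖fderiv ℝ ρ z‖ ≤ C₀ / Metric.infDist z 𝒳)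
    (R : ℝ) (hR : 0 < R) :
    ∫⁻ z in Metric.ball (0 : EuclideanSpace ℝ (Fin m)) R \ 𝒳,
        ENNReal.ofReal (‖fderiv ℝ ρ z‖ ^ (k - 1))
      < ⊤ :=
  fderiv_retraction_pow_locally_integrable_general m k hk2 hkm 𝒳 h𝒳ne h𝒳c n Vs hVne hVdim h𝒳sub ρ C₀
    hDρ R
end

section
/- Let d, m ≥ 1 and k ≥ 2 be integers. Let 𝒳 ⊆ ℝ^m be a nonempty compact set such that z ↦ dist(z, 𝒳)^{−(k−1)} is locally integrable on ℝ^m, and let ρ be a map of class C¹ on ℝ^m ∖ 𝒳 with values in ℝ^m satisfying ‖Dρ(z)‖ ≤ C₀ / dist(z, 𝒳) for all z ∈ ℝ^m ∖ 𝒳 and some C₀ > 0. Then for all M, Λ > 0 there exists a constant C, depending only on m, k, M, Λ, C₀ and 𝒳, such that for every bounded open set Ω ⊆ ℝ^d and every C¹ map v : Ω → ℝ^m with |v(x)| ≤ Λ for all x ∈ Ω, one has ∫_{B_M^m} ( ∫_{{x ∈ Ω : v(x) − y ∉ 𝒳}} ‖Dρ(v(x) − y)‖^{k−1} ‖Dv(x)‖^{k−1}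 dx ) dy ≤ C ∫_Ω ‖Dv(x)‖^{k−1} dx. -/
open MeasureTheory Metric
open scoped ENNReal

/-!
On `{v - y ∉ 𝒳}` the bound on `Dρ` gives
`‖Dρ(v - y)‖^{k-1} ‖Dv‖^{k-1} ≤ C₀^{k-1} dist(v - y, 𝒳)^{-(k-1)} ‖Dv‖^{k-1}`.
Integrating first in `y` (Tonelli), the substitution `z = v(x) - y` maps `B_M` into `B_{Λ+M}`
because `|v| ≤ Λ`, so the `y`-integral is at most `∫_{B_{Λ+M}} dist(z, 𝒳)^{-(k-1)} dz`, which is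
finite by local integrability and independent of `x`, `Ω` and `v`.
-/

noncomputable def infDistInvPow {Z : Type*} [PseudoMetricSpace Z] (s : Set Z) (n : ℕ)
    (z : Z) : ℝ≥0∞ :=
  (ENNReal.ofReal (infDist z s))⁻¹ ^ n

section InfDistInvPow

variable {Z : Type*} [PseudoMetricSpace Z]

theorem measurable_infDistInvPow [MeasurableSpace Z] [OpensMeasurableSpace Z] (s : Set Z)
    (n : ℕ) : Measurable (infDistInvPow s n) :=
  (ENNReal.measurable_ofReal.comp (continuous_infDist_pt s).measurable).inv.pow_const n

theorem ofReal_pow_mul_le_of_le_div_infDist {s : Set Z} (hs : IsClosed s) (hne : s.Nonempty)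
    {z : Z} (hz : z ∉ s) {a b C : ℝ} (ha : 0 ≤ a) (hb : 0 ≤ b) (hC : 0 ≤ C)
    (haC : a ≤ C / infDist z s) (n : ℕ) :
    ENNReal.ofReal (a ^ n * b) ≤
      ENNReal.ofReal (C ^ n) * (infDistInvPow s n z * ENNReal.ofReal b) := by
  have ht : 0 < infDist z s := (hs.notMem_iff_infDist_pos hne).1 hz
  calc ENNReal.ofReal (a ^ n * b) ≤ ENNReal.ofReal ((C / infDist z s) ^ n * b) := by
        gcongr
    _ = ENNReal.ofReal (C ^ n) * (infDistInvPow s n z * ENNReal.ofReal b) := by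
        rw [ENNReal.ofReal_mul (by positivity), ENNReal.ofReal_pow (by positivity),
          ENNReal.ofReal_div_of_pos ht, ENNReal.ofReal_pow hC, div_eq_mul_inv, mul_pow,
          infDistInvPow, mul_assoc]

variable {X F : Type*} [MeasurableSpace X] {μ : Measure X} [MeasurableSpace Z]
  [OpensMeasurableSpace Z] [NormedAddCommGroup F]

theorem setLIntegral_norm_pow_mul_le_infDistInvPow {s : Set Z} (hs : IsClosed s)
    (hne : s.Nonempty) {A : Z → F} {C : ℝ} (hC : 0 ≤ C)
    (hA : ∀ z ∉ s, ‖A z‖ ≤ C / infDist z s) {Ω : Set X} {w : X → Z}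
    (hw : AEMeasurable w (μ.restrict Ω)) {b : X → ℝ} (hb : Measurable b) (hb₀ : ∀ x, 0 ≤ b x)
    (n : ℕ) :
    ∫⁻ x in {x ∈ Ω | w x ∉ s}, ENNReal.ofReal (‖A (w x)‖ ^ n * b x) ∂μ ≤
      ENNReal.ofReal (C ^ n) * ∫⁻ x in Ω, infDistInvPow s n (w x) * ENNReal.ofReal (b x) ∂μ := by
  have hmeas : AEMeasurable (fun x ↦ infDistInvPow s n (w x) * ENNReal.ofReal (b x))
      (μ.restrict Ω) :=
    ((measurable_infDistInvPow s n).comp_aemeasurable hw).mul hb.ennreal_ofReal.aemeasurable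
  have hsub : {x ∈ Ω | w x ∉ s} ⊆ Ω := fun x hx ↦ hx.1
  rw [← lintegral_const_mul'' _ hmeas]
  refine (setLIntegral_mono_ae ?_ (ae_of_all _ fun x hx ↦ ?_)).trans (lintegral_mono_set hsub)
  · exact (aemeasurable_const.mul hmeas).mono_measure (Measure.restrict_mono hsub le_rfl)
  · exact ofReal_pow_mul_le_of_le_div_infDist hs hne hx.2 (norm_nonneg _) (hb₀ x) hC
      (hA _ hx.2) n

end InfDistInvPow

section Translation

variable {G : Type*} [NormedAddCommGroup G] [MeasurableSpace G] [OpensMeasurableSpace G]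
  [MeasurableAdd G] [MeasurableNeg G] {ν : Measure G} [ν.IsAddLeftInvariant] [ν.IsNegInvariant]

theorem setLIntegral_ball_comp_sub_le (f : G → ℝ≥0∞) {w : G} {Λ : ℝ} (hw : ‖w‖ ≤ Λ) (M : ℝ) :
    ∫⁻ y in ball 0 M, f (w - y) ∂ν ≤ ∫⁻ z in ball 0 (Λ + M), f z ∂ν := by
  calc ∫⁻ y in ball 0 M, f (w - y) ∂ν
      ≤ ∫⁻ y in ball 0 M, (ball (0 : G) (Λ + M)).indicator f (w - y) ∂ν := by
        refine setLIntegral_mono' measurableSet_ball fun y hy ↦ ?_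
        have hwy : w - y ∈ ball (0 : G) (Λ + M) := by
          rw [mem_ball_zero_iff] at hy ⊢
          exact (norm_sub_le w y).trans_lt (add_lt_add_of_le_of_lt hw hy)
        rw [Set.indicator_of_mem hwy]
    _ ≤ ∫⁻ y, (ball (0 : G) (Λ + M)).indicator f (w - y) ∂ν := setLIntegral_le_lintegral _ _
    _ = ∫⁻ z in ball 0 (Λ + M), f z ∂ν := by
        rw [lintegral_sub_left_eq_self, lintegral_indicator measurableSet_ball]

variable [MeasurableSub₂ G] [SFinite ν] {X : Type*} [MeasurableSpace X] {μ : Measure X}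
  [SFinite μ]

theorem setLIntegral_ball_setLIntegral_comp_sub_mul_le {f : G → ℝ≥0∞} (hf : Measurable f)
    {h : X → ℝ≥0∞} (hh : Measurable h) {Ω : Set X} {v : X → G}
    (hv : AEMeasurable v (μ.restrict Ω)) {Λ : ℝ} (hvΛ : ∀ x ∈ Ω, ‖v x‖ ≤ Λ) (M : ℝ) :
    ∫⁻ y in ball 0 M, ∫⁻ x in Ω, f (v x - y) * h x ∂μ ∂ν ≤
      (∫⁻ z in ball 0 (Λ + M), f z ∂ν) * ∫⁻ x in Ω, h x ∂μ := by
  have hjoint : AEMeasurable (Function.uncurry fun y x ↦ f (v x - y) * h x)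
      ((ν.restrict (ball 0 M)).prod (μ.restrict Ω)) :=
    (hf.comp_aemeasurable (hv.comp_snd.sub measurable_fst.aemeasurable)).mul
      (hh.comp measurable_snd).aemeasurable
  rw [lintegral_lintegral_swap hjoint, ← lintegral_const_mul _ hh]
  refine setLIntegral_mono (measurable_const.mul hh) fun x hx ↦ ?_
  have hfx : Measurable fun y ↦ f (v x - y) := hf.comp (measurable_const.sub measurable_id)
  rw [lintegral_mul_const _ hfx]
  exact mul_le_mul_left (setLIntegral_ball_comp_sub_le f (hvΛ x hx) M) _

end Translation

theorem projection_gradient_estimate_general (d m k : ℕ)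
    (𝒳 : Set (EuclideanSpace ℝ (Fin m))) (h𝒳ne : 𝒳.Nonempty) (h𝒳c : IsCompact 𝒳)
    (hloc : ∀ R : ℝ, 0 < R →
      ∫⁻ z in Metric.ball (0 : EuclideanSpace ℝ (Fin m)) R,
          ((ENNReal.ofReal (Metric.infDist z 𝒳))⁻¹) ^ (k - 1) < ⊤)
    (ρ : EuclideanSpace ℝ (Fin m) → EuclideanSpace ℝ (Fin m))
    (C₀ : ℝ) (hC₀ : 0 < C₀)
    (hDρ : ∀ z ∉ 𝒳, ‖fderiv ℝ ρ z‖ ≤ C₀ / Metric.infDist z 𝒳)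
    (M Λ : ℝ) (hM : 0 < M) (hΛ : 0 < Λ) :
    ∃ C : ℝ, 0 < C ∧
      ∀ (Ω : Set (EuclideanSpace ℝ (Fin d))), IsOpen Ω → Bornology.IsBounded Ω →
        ∀ v : EuclideanSpace ℝ (Fin d) → EuclideanSpace ℝ (Fin m),
          ContDiffOn ℝ 1 v Ω → (∀ x ∈ Ω, ‖v x‖ ≤ Λ) →
          (∫⁻ y in Metric.ball (0 : EuclideanSpace ℝ (Fin m)) M,
              ∫⁻ x in {x ∈ Ω | v x - y ∉ 𝒳},
                ENNReal.ofReal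
                  (‖fderiv ℝ ρ (v x - y)‖ ^ (k - 1) * ‖fderiv ℝ v x‖ ^ (k - 1)))
            ≤ ENNReal.ofReal C *
                ∫⁻ x in Ω, ENNReal.ofReal (‖fderiv ℝ v x‖ ^ (k - 1)) := by
  set K := ∫⁻ z in ball (0 : EuclideanSpace ℝ (Fin m)) (Λ + M), infDistInvPow 𝒳 (k - 1) z
  have hK : K ≠ ⊤ := (hloc (Λ + M) (by linarith)).ne
  refine ⟨C₀ ^ (k - 1) * (K.toReal + 1), by positivity, fun Ω hΩ _ v hv hvΛ ↦ ?_⟩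
  have hvm : AEMeasurable v (volume.restrict Ω) := hv.continuousOn.aemeasurable hΩ.measurableSet
  have hb : Measurable fun x ↦ ‖fderiv ℝ v x‖ ^ (k - 1) :=
    (measurable_fderiv ℝ v).norm.pow_const _
  calc _ ≤ ∫⁻ y in ball 0 M, ENNReal.ofReal (C₀ ^ (k - 1)) *
          ∫⁻ x in Ω, infDistInvPow 𝒳 (k - 1) (v x - y) *
            ENNReal.ofReal (‖fderiv ℝ v x‖ ^ (k - 1)) :=
        lintegral_mono fun y ↦ setLIntegral_norm_pow_mul_le_infDistInvPow h𝒳c.isClosed h𝒳ne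
          hC₀.le hDρ (hvm.sub_const y) hb (fun x ↦ by positivity) _
    _ ≤ ENNReal.ofReal (C₀ ^ (k - 1)) *
          (K * ∫⁻ x in Ω, ENNReal.ofReal (‖fderiv ℝ v x‖ ^ (k - 1))) := by
        rw [lintegral_const_mul' _ _ ENNReal.ofReal_ne_top]
        gcongr
        exact setLIntegral_ball_setLIntegral_comp_sub_mul_le (measurable_infDistInvPow 𝒳 _)
          hb.ennreal_ofReal hvm hvΛ M
    _ ≤ _ := by
        rw [← mul_assoc, ENNReal.ofReal_mul (by positivity)]
        gcongr
        rw [← ENNReal.ofReal_toReal hK]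
        exact ENNReal.ofReal_le_ofReal (by simp)

/-- The projection estimate (key estimate of Lemma 3.6): if `dist(·, 𝒳)^{-(k-1)}` is
locally integrable and `‖Dρ(z)‖ ≤ C₀ / dist(z, 𝒳)`, then for all `M, Λ > 0` there is a
constant `C` such that for every bounded open `Ω ⊆ ℝ^d` and every `C¹` map `v : Ω → ℝ^m`
with `|v| ≤ Λ`, the average over `y ∈ B_M` of `∫_Ω ‖D(ρ∘(v - y))‖^{k-1}` is bounded by
`C ∫_Ω ‖Dv‖^{k-1}`. -/
theorem projection_gradient_estimate (d m k : ℕ) (hd : 1 ≤ d) (hm : 1 ≤ m) (hk : 2 ≤ k)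
    (𝒳 : Set (EuclideanSpace ℝ (Fin m))) (h𝒳ne : 𝒳.Nonempty) (h𝒳c : IsCompact 𝒳)
    (hloc : ∀ R : ℝ, 0 < R →
      ∫⁻ z in Metric.ball (0 : EuclideanSpace ℝ (Fin m)) R,
          ((ENNReal.ofReal (Metric.infDist z 𝒳))⁻¹) ^ (k - 1) < ⊤)
    (ρ : EuclideanSpace ℝ (Fin m) → EuclideanSpace ℝ (Fin m))
    (hρ : ContDiffOn ℝ 1 ρ 𝒳ᶜ)
    (C₀ : ℝ) (hC₀ : 0 < C₀)
    (hDρ : ∀ z ∉ 𝒳, ‖fderiv ℝ ρ z‖ ≤ C₀ / Metric.infDist z 𝒳)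
    (M Λ : ℝ) (hM : 0 < M) (hΛ : 0 < Λ) :
    ∃ C : ℝ, 0 < C ∧
      ∀ (Ω : Set (EuclideanSpace ℝ (Fin d))), IsOpen Ω → Bornology.IsBounded Ω →
        ∀ v : EuclideanSpace ℝ (Fin d) → EuclideanSpace ℝ (Fin m),
          ContDiffOn ℝ 1 v Ω → (∀ x ∈ Ω, ‖v x‖ ≤ Λ) →
          (∫⁻ y in Metric.ball (0 : EuclideanSpace ℝ (Fin m)) M,
              ∫⁻ x in {x ∈ Ω | v x - y ∉ 𝒳},
                ENNReal.ofReal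
                  (‖fderiv ℝ ρ (v x - y)‖ ^ (k - 1) * ‖fderiv ℝ v x‖ ^ (k - 1)))
            ≤ ENNReal.ofReal C *
                ∫⁻ x in Ω, ENNReal.ofReal (‖fderiv ℝ v x‖ ^ (k - 1)) :=
  projection_gradient_estimate_general d m k 𝒳 h𝒳ne h𝒳c hloc ρ C₀ hC₀ hDρ M Λ hM hΛ
end

section
/- Let d, m ≥ 1 and p ≥ 1. Let 𝒳 ⊆ ℝ^m be a compact set of Lebesgue measure zero, and let ρ : ℝ^m → ℝ^m be a bounded Borel map which is continuous at every point of ℝ^m ∖ 𝒳. Let Ω ⊆ ℝ^d be a bounded measurable set, let Λ > 0, and let v_j, v : Ω → ℝ^m be measurable maps such that |v_j(x)| ≤ Λ for a.e. x ∈ Ω and all j, and v_j → v almost everywhere on Ω as j → +∞. Then for every M > 0, lim_{j→+∞} ∫_{B_M^m} ( ∫_Ω |ρ(v_j(x) − y) − ρ(v(x) − y)|^p dx ) dy = 0. -/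
/-!
Both integrals can be taken jointly over `B_M × Ω`, a finite measure space on which the
integrand is bounded by `(2B)^p`, so by dominated convergence it suffices that
`ρ (v_j x - y) → ρ (v x - y)` for a.e. `(y, x)`. This holds wherever `v_j x → v x` and
`v x - y ∉ 𝒳`; the second condition fails only on a null set because `(y, x) ↦ v x - y`
is quasi-measure-preserving from the product measure to Lebesgue measure.
-/

open MeasureTheory Filter Topology
open scoped ENNReal

theorem tendsto_lintegral_ofReal_norm_rpow_of_tendsto_ae {β E : Type*} [MeasurableSpace β]
    {μ : Measure β} [IsFiniteMeasure μ] [NormedAddCommGroup E] {h : ℕ → β → E} {C p : ℝ}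
    (hp : 0 < p) (hmeas : ∀ j, AEStronglyMeasurable (h j) μ)
    (hC : ∀ j, ∀ᵐ z ∂μ, ‖h j z‖ ≤ C)
    (hlim : ∀ᵐ z ∂μ, Tendsto (fun j => h j z) atTop (𝓝 0)) :
    Tendsto (fun j => ∫⁻ z, ENNReal.ofReal (‖h j z‖ ^ p) ∂μ) atTop (𝓝 0) := by
  have hcont : Continuous fun e : E => ENNReal.ofReal (‖e‖ ^ p) :=
    ENNReal.continuous_ofReal.comp ((Real.continuous_rpow_const hp.le).comp continuous_norm)
  have hdom := tendsto_lintegral_of_dominated_convergence' (μ := μ) (f := fun _ => 0)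
    (fun _ => ENNReal.ofReal (C ^ p))
    (fun j => ((hmeas j).norm.aemeasurable.pow_const p).ennreal_ofReal)
    (fun j => (hC j).mono fun z hz =>
      ENNReal.ofReal_le_ofReal (Real.rpow_le_rpow (norm_nonneg _) hz hp.le))
    (by simpa only [lintegral_const] using
      ENNReal.mul_ne_top ENNReal.ofReal_ne_top (measure_ne_top μ _))
    (hlim.mono fun z hz => by simpa [Function.comp_def, hp.ne'] using (hcont.tendsto 0).comp hz)
  simpa using hdom

theorem quasiMeasurePreserving_sub_fst {G α : Type*} [MeasurableSpace G] [AddGroup G]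
    [MeasurableAdd₂ G] [MeasurableNeg G] [MeasurableSpace α] (μ : Measure G)
    [μ.IsAddLeftInvariant] [SFinite μ] (ν : Measure α) [SFinite ν] {g : α → G}
    (hg : Measurable g) :
    Measure.QuasiMeasurePreserving (fun z : G × α => g z.2 - z.1) (μ.prod ν) μ :=
  QuasiMeasurePreserving.prod_of_left ((hg.comp measurable_snd).sub measurable_fst)
    (ae_of_all _ fun x => quasiMeasurePreserving_sub_left μ (g x))

theorem reprojection_Lp_convergence_general (d m : ℕ)
    (p : ℝ) (hp : 1 ≤ p)
    (𝒳 : Set (EuclideanSpace ℝ (Fin m))) (h𝒳0 : volume 𝒳 = 0)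
    (ρ : EuclideanSpace ℝ (Fin m) → EuclideanSpace ℝ (Fin m))
    (hρm : Measurable ρ) (B : ℝ) (hρb : ∀ z, ‖ρ z‖ ≤ B)
    (hρc : ∀ z ∉ 𝒳, ContinuousAt ρ z)
    (Ω : Set (EuclideanSpace ℝ (Fin d)))
    (hΩb : Bornology.IsBounded Ω)
    (v : ℕ → EuclideanSpace ℝ (Fin d) → EuclideanSpace ℝ (Fin m))
    (v₀ : EuclideanSpace ℝ (Fin d) → EuclideanSpace ℝ (Fin m))
    (hvm : ∀ j, Measurable (v j)) (hv₀m : Measurable v₀)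
    (hconv : ∀ᵐ x ∂(volume.restrict Ω),
      Filter.Tendsto (fun j => v j x) Filter.atTop (nhds (v₀ x)))
    (M : ℝ) :
    Filter.Tendsto
      (fun j => ∫⁻ y in Metric.ball (0 : EuclideanSpace ℝ (Fin m)) M,
        ∫⁻ x in Ω, ENNReal.ofReal (‖ρ (v j x - y) - ρ (v₀ x - y)‖ ^ p))
      Filter.atTop (nhds 0) := by
  set μy := volume.restrict (Metric.ball (0 : EuclideanSpace ℝ (Fin m)) M)
  set μx := volume.restrict Ω
  have : IsFiniteMeasure μy := isFiniteMeasure_restrict.mpr measure_ball_lt_top.ne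
  have : IsFiniteMeasure μx := isFiniteMeasure_restrict.mpr hΩb.measure_lt_top.ne
  set h : ℕ → EuclideanSpace ℝ (Fin m) × EuclideanSpace ℝ (Fin d) →
      EuclideanSpace ℝ (Fin m) := fun j z => ρ (v j z.2 - z.1) - ρ (v₀ z.2 - z.1)
  have hmeas : ∀ j, Measurable (h j) := fun j =>
    (hρm.comp (((hvm j).comp measurable_snd).sub measurable_fst)).sub
      (hρm.comp ((hv₀m.comp measurable_snd).sub measurable_fst))
  have hprod : ∀ j, (∫⁻ y in Metric.ball (0 : EuclideanSpace ℝ (Fin m)) M,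
      ∫⁻ x in Ω, ENNReal.ofReal (‖ρ (v j x - y) - ρ (v₀ x - y)‖ ^ p)) =
      ∫⁻ z, ENNReal.ofReal (‖h j z‖ ^ p) ∂μy.prod μx := fun j =>
    (lintegral_prod _
      (((hmeas j).norm.pow_const p).ennreal_ofReal.aemeasurable)).symm
  have hreg : ∀ᵐ z ∂μy.prod μx, v₀ z.2 - z.1 ∉ 𝒳 :=
    ((quasiMeasurePreserving_sub_fst volume μx hv₀m).mono_left
      (Measure.absolutelyContinuous_restrict.prod Measure.AbsolutelyContinuous.rfl)).ae
      (measure_eq_zero_iff_ae_notMem.mp h𝒳0)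
  have hlim : ∀ᵐ z ∂μy.prod μx, Tendsto (fun j => h j z) atTop (𝓝 0) := by
    filter_upwards [hreg, Measure.quasiMeasurePreserving_snd.ae hconv] with z hz hvz
    exact tendsto_sub_nhds_zero_iff.mpr ((hρc _ hz).tendsto.comp (hvz.sub_const z.1))
  exact (tendsto_congr hprod).mpr <|
    tendsto_lintegral_ofReal_norm_rpow_of_tendsto_ae (zero_lt_one.trans_le hp)
      (fun j => (hmeas j).aestronglyMeasurable)
      (fun j => ae_of_all _ fun z => (norm_sub_le _ _).trans (add_le_add (hρb _) (hρb _)))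
      hlim

/-- `L^p`-continuity of the reprojection operator `Φ(v) : y ↦ ρ∘(v - y)` (Lemma 3.6):
if `ρ` is bounded Borel and continuous outside a compact null set `𝒳`, `v_j` are
uniformly bounded on `Ω` and converge a.e. to `v`, then
`∫_{B_M} ∫_Ω |ρ(v_j(x) - y) - ρ(v(x) - y)|^p dx dy → 0`. -/
theorem reprojection_Lp_convergence (d m : ℕ) (hd : 1 ≤ d) (hm : 1 ≤ m)
    (p : ℝ) (hp : 1 ≤ p)
    (𝒳 : Set (EuclideanSpace ℝ (Fin m))) (h𝒳c : IsCompact 𝒳) (h𝒳0 : volume 𝒳 = 0)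
    (ρ : EuclideanSpace ℝ (Fin m) → EuclideanSpace ℝ (Fin m))
    (hρm : Measurable ρ) (B : ℝ) (hρb : ∀ z, ‖ρ z‖ ≤ B)
    (hρc : ∀ z ∉ 𝒳, ContinuousAt ρ z)
    (Ω : Set (EuclideanSpace ℝ (Fin d))) (hΩm : MeasurableSet Ω)
    (hΩb : Bornology.IsBounded Ω)
    (Λ : ℝ) (hΛ : 0 < Λ)
    (v : ℕ → EuclideanSpace ℝ (Fin d) → EuclideanSpace ℝ (Fin m))
    (v₀ : EuclideanSpace ℝ (Fin d) → EuclideanSpace ℝ (Fin m))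
    (hvm : ∀ j, Measurable (v j)) (hv₀m : Measurable v₀)
    (hvΛ : ∀ j, ∀ᵐ x ∂(volume.restrict Ω), ‖v j x‖ ≤ Λ)
    (hconv : ∀ᵐ x ∂(volume.restrict Ω),
      Filter.Tendsto (fun j => v j x) Filter.atTop (nhds (v₀ x)))
    (M : ℝ) (hM : 0 < M) :
    Filter.Tendsto
      (fun j => ∫⁻ y in Metric.ball (0 : EuclideanSpace ℝ (Fin m)) M,
        ∫⁻ x in Ω, ENNReal.ofReal (‖ρ (v j x - y) - ρ (v₀ x - y)‖ ^ p))
      Filter.atTop (nhds 0) :=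
  reprojection_Lp_convergence_general d m p hp 𝒳 h𝒳0 ρ hρm B hρb hρc Ω hΩb v v₀ hvm hv₀m hconv M
end
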